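/- Concatenation of Vector-Encodings (Lemma 2.5): Let D = 2^d, N = 2^n, 0 ≤ ε < 1, and for each j ∈ {0,…,D−1} let α_j ≥ 1, let |ψ_j⟩ ∈ ℂ^{2^n} be ℓ2-normalized, and let V_j be a unitary on ℂ^{2^{a+d+n}} such that (⟨0|_a ⊗ I_{d+n})V_j|0⟩_{a+d+n} = (1/α_j) |j⟩_d ⊗ (|ψ_j⟩ − |E_j⟩) for some vector |E_j⟩ ∈ ℂ^{2^n} with ‖|E_j⟩‖₂ ≤ ε (so V_j is an (α_j, a, ε)-VE for |j⟩_d ⊗ |ψ_j⟩ whose encoded vector is exactly supported on the j-th block). Define |Ψ⟩ := Σ_{j=0}^{D−1} |j⟩_d ⊗ |ψ_j⟩/α_j, 𝒩 := ‖|Ψ⟩‖₂ = √(Σ_j 1/α_j²), S := Σ_{j=0}^{D−1} |j⟩⟨j|_d ⊗ V_j, and Ĥ := H^{⊗d} ⊗ I_{a+d+n} where H is the 2×2 Hadamard matrix. Then Ĥ S Ĥ is a (D/𝒩, d+a, ε)-VE for |Ψ⟩/𝒩. -/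

import Mathlib

open scoped Kronecker Matrix

noncomputable section

/-- Reinterpret a plain function as an element of `EuclideanSpace`. -/
def toEuc {𝕜 : Type*} [RCLike 𝕜] {ι : Type*} (v : ι → 𝕜) : EuclideanSpace 𝕜 ι := WithLp.toLp 2 v

/-- The vector encoded in the first block of the first column of `U`:
`(⟨0| ⊗ I) U |0⟩`. -/
def encVec {I N : Type*} [Zero I] [Zero N] (U : Matrix (I × N) (I × N) ℂ) :
    EuclideanSpace ℂ N := toEuc fun i => U (0, i) (0, 0)

/-- `U` is an `(α, ·, ε)`-vector-encoding of `ψ`. -/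
def IsVE {I N : Type*} [Fintype I] [DecidableEq I] [Zero I] [Fintype N] [DecidableEq N] [Zero N]
    (U : Matrix (I × N) (I × N) ℂ) (α ε : ℝ) (ψ : EuclideanSpace ℂ N) : Prop :=
  U ∈ Matrix.unitaryGroup (I × N) ℂ ∧ ‖ψ - (α : ℂ) • encVec U‖ ≤ ε

/-- The `d`-fold tensor power `H^{⊗d}` of the Hadamard matrix, with entries
`2^{-d/2} (-1)^{⟨j,k⟩}` where `⟨j,k⟩` is the bitwise inner product of `j` and `k`. -/
def Hpow (d : ℕ) : Matrix (Fin (2^d)) (Fin (2^d)) ℂ :=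
  Matrix.of fun j k => (((Real.sqrt 2 ^ d)⁻¹ : ℝ) : ℂ) *
    (-1 : ℂ) ^ (∑ i ∈ Finset.range d, ((j : ℕ).testBit i).toNat * ((k : ℕ).testBit i).toNat)

/-!
`S` is block diagonal with unitary blocks and `Ĥ` is a Kronecker product of unitaries, so `Ĥ S Ĥ`
is unitary. Its encoded vector only involves the first row and column of `H^{⊗d}`, whose entries
are all `2^{-d/2}`; hence it is `2^{-d}` times the sum of the encoded vectors of the `V_j`, i.e.
`2^{-d} Σ_j |j⟩ ⊗ (ψ_j - E_j)/α_j`. After rescaling by `2^d/𝒩` the error is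
`Σ_j |j⟩ ⊗ E_j/(α_j 𝒩)`, of squared norm at most `ε² Σ_j 1/(α_j 𝒩)² = ε²`.
-/

namespace Matrix

section Multiplexer

variable {ι m α : Type*} [Fintype ι] [DecidableEq ι] [CommSemiring α]

theorem sum_single_kronecker_eq_reindex_blockDiagonal (V : ι → Matrix m m α) :
    ∑ k, single k k (1 : α) ⊗ₖ V k =
      reindex (Equiv.prodComm m ι) (Equiv.prodComm m ι) (blockDiagonal V) := by
  ext ⟨k, x⟩ ⟨k', x'⟩
  simp [sum_apply, single_apply, blockDiagonal_apply, ite_and]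

theorem kronecker_one_mul_sum_single_kronecker_mul_kronecker_one_apply [Fintype m] [DecidableEq m]
    (A B : Matrix ι ι α) (V : ι → Matrix m m α) (j j' : ι) (x x' : m) :
    ((A ⊗ₖ 1 * (∑ k, single k k 1 ⊗ₖ V k) * B ⊗ₖ 1 : Matrix (ι × m) (ι × m) α)) (j, x) (j', x') =
      ∑ k, A j k * B k j' * V k x x' := by
  simp_rw [Finset.mul_sum, Finset.sum_mul, ← mul_kronecker_mul, one_mul, mul_one, sum_apply,
    kroneckerMap_apply]
  simp [mul_apply, single_apply, ite_and]

end Multiplexer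

section Unitary

variable {ι m α : Type*} [Fintype ι] [DecidableEq ι] [Fintype m] [DecidableEq m]
  [CommRing α] [StarRing α]

theorem reindex_mem_unitaryGroup {n : Type*} [Fintype n] [DecidableEq n] (e : m ≃ n)
    {U : Matrix m m α} (hU : U ∈ unitaryGroup m α) :
    reindex e e U ∈ unitaryGroup n α := by
  rw [mem_unitaryGroup_iff, star_eq_conjTranspose, conjTranspose_reindex, reindex_apply,
    reindex_apply, submatrix_mul_equiv, ← star_eq_conjTranspose, mem_unitaryGroup_iff.mp hU,
    submatrix_one_equiv]

theorem kronecker_mem_unitaryGroup {A : Matrix ι ι α} {B : Matrix m m α}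
    (hA : A ∈ unitaryGroup ι α) (hB : B ∈ unitaryGroup m α) :
    A ⊗ₖ B ∈ unitaryGroup (ι × m) α := by
  rw [mem_unitaryGroup_iff, star_eq_conjTranspose, conjTranspose_kronecker,
    ← mul_kronecker_mul, ← star_eq_conjTranspose, ← star_eq_conjTranspose,
    mem_unitaryGroup_iff.mp hA, mem_unitaryGroup_iff.mp hB, one_kronecker_one]

theorem blockDiagonal_mem_unitaryGroup {V : ι → Matrix m m α}
    (hV : ∀ k, V k ∈ unitaryGroup m α) : blockDiagonal V ∈ unitaryGroup (m × ι) α := by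
  rw [mem_unitaryGroup_iff, star_eq_conjTranspose, blockDiagonal_conjTranspose,
    ← blockDiagonal_mul]
  simp_rw [← star_eq_conjTranspose, mem_unitaryGroup_iff.mp (hV _)]
  exact blockDiagonal_one

theorem kronecker_one_mul_sum_single_kronecker_mul_mem_unitaryGroup {A B : Matrix ι ι α}
    {V : ι → Matrix m m α} (hA : A ∈ unitaryGroup ι α) (hB : B ∈ unitaryGroup ι α)
    (hV : ∀ k, V k ∈ unitaryGroup m α) :
    A ⊗ₖ 1 * (∑ k, single k k 1 ⊗ₖ V k) * B ⊗ₖ 1 ∈ unitaryGroup (ι × m) α := by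
  rw [sum_single_kronecker_eq_reindex_blockDiagonal]
  exact mul_mem (mul_mem (kronecker_mem_unitaryGroup hA (one_mem _))
    (reindex_mem_unitaryGroup _ (blockDiagonal_mem_unitaryGroup hV)))
    (kronecker_mem_unitaryGroup hB (one_mem _))

end Unitary

end Matrix

def bitDot (d j k : ℕ) : ℕ := ∑ i ∈ Finset.range d, (j.testBit i).toNat * (k.testBit i).toNat

theorem bitDot_comm (d j k : ℕ) : bitDot d j k = bitDot d k j := by
  simp only [bitDot, mul_comm]

theorem bitDot_zero_left (d k : ℕ) : bitDot d 0 k = 0 := by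
  simp [bitDot]

theorem toNat_testBit_eq_finFunctionFinEquiv_symm {d : ℕ} (m : Fin (2^d)) (i : Fin d) :
    ((m : ℕ).testBit i).toNat = (finFunctionFinEquiv.symm m i : ℕ) := by
  rw [Nat.toNat_testBit]; rfl

theorem bitDot_eq_sum_finFunctionFinEquiv_symm {d : ℕ} (j k : Fin (2^d)) :
    bitDot d j k = ∑ i, (finFunctionFinEquiv.symm j i : ℕ) * finFunctionFinEquiv.symm k i := by
  simp_rw [← toNat_testBit_eq_finFunctionFinEquiv_symm]
  exact (Fin.sum_univ_eq_sum_range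
    (fun i => ((j : ℕ).testBit i).toNat * ((k : ℕ).testBit i).toNat) d).symm

theorem sum_fin_two_neg_one_pow (u v : Fin 2) :
    ∑ x : Fin 2, (-1 : ℂ) ^ (((u : ℕ) + v) * x) = if u = v then 2 else 0 := by
  fin_cases u <;> fin_cases v <;> norm_num [Fin.sum_univ_two]

-- Summing over the binary digit vectors instead of `m`, the sum factors into one sum per digit.
theorem sum_neg_one_pow_bitDot_add (d : ℕ) (j k : Fin (2^d)) :
    ∑ m : Fin (2^d), (-1 : ℂ) ^ (bitDot d j m + bitDot d k m) = if j = k then 2 ^ d else 0 := by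
  set b : Fin (2^d) → Fin d → Fin 2 := fun m => finFunctionFinEquiv.symm m
  have hsplit (m : Fin (2^d)) : (-1 : ℂ) ^ (bitDot d j m + bitDot d k m) =
      ∏ i, (-1 : ℂ) ^ (((b j i : ℕ) + b k i) * b m i) := by
    simp_rw [Finset.prod_pow_eq_pow_sum, bitDot_eq_sum_finFunctionFinEquiv_symm,
      ← Finset.sum_add_distrib, add_mul]
    rfl
  simp_rw [hsplit]
  rw [finFunctionFinEquiv.symm.sum_comp (fun g => ∏ i, (-1 : ℂ) ^ (((b j i : ℕ) + b k i) * g i)),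
    ← Fintype.prod_sum fun i (x : Fin 2) => (-1 : ℂ) ^ (((b j i : ℕ) + b k i) * x)]
  simp_rw [sum_fin_two_neg_one_pow, Fintype.prod_ite_zero, Finset.prod_const, Finset.card_univ,
    Fintype.card_fin, ← funext_iff, b, finFunctionFinEquiv.symm.injective.eq_iff]

theorem ofReal_inv_sqrt_two_pow_mul_self (d : ℕ) :
    (((Real.sqrt 2 ^ d)⁻¹ : ℝ) : ℂ) * (((Real.sqrt 2 ^ d)⁻¹ : ℝ) : ℂ) = (2 ^ d)⁻¹ := by
  rw [← Complex.ofReal_mul, ← mul_inv, ← mul_pow, Real.mul_self_sqrt zero_le_two]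
  push_cast; rfl

theorem Hpow_apply (d : ℕ) (j k : Fin (2^d)) :
    Hpow d j k = (((Real.sqrt 2 ^ d)⁻¹ : ℝ) : ℂ) * (-1) ^ bitDot d j k := rfl

theorem Hpow_conjTranspose (d : ℕ) : (Hpow d)ᴴ = Hpow d := by
  ext j k
  simp [Hpow_apply, bitDot_comm d j]

theorem Hpow_mul_self (d : ℕ) : Hpow d * Hpow d = 1 := by
  ext j k
  rw [Matrix.mul_apply, Matrix.one_apply]
  have hterm (m : Fin (2^d)) :
      Hpow d j m * Hpow d m k = (2 ^ d)⁻¹ * (-1) ^ (bitDot d j m + bitDot d k m) := by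
    rw [Hpow_apply, Hpow_apply, mul_mul_mul_comm, ofReal_inv_sqrt_two_pow_mul_self, ← pow_add,
      bitDot_comm d m]
  rw [Finset.sum_congr rfl fun m _ => hterm m, ← Finset.mul_sum, sum_neg_one_pow_bitDot_add]
  split_ifs <;> simp

theorem Hpow_mem_unitaryGroup (d : ℕ) : Hpow d ∈ Matrix.unitaryGroup (Fin (2^d)) ℂ := by
  rw [Matrix.mem_unitaryGroup_iff, Matrix.star_eq_conjTranspose, Hpow_conjTranspose,
    Hpow_mul_self]

theorem Hpow_zero_apply_mul_Hpow_apply_zero (d : ℕ) (k : Fin (2^d)) :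
    Hpow d 0 k * Hpow d k 0 = (2 ^ d)⁻¹ := by
  rw [Hpow_apply, Hpow_apply, bitDot_comm d k, Fin.coe_ofNat_eq_mod, Nat.zero_mod,
    bitDot_zero_left, pow_zero, mul_one, ofReal_inv_sqrt_two_pow_mul_self]

theorem encVec_kronecker_one_mul_sum_single_kronecker_mul {ι I N : Type*} [Fintype ι]
    [DecidableEq ι] [Zero ι] [Fintype I] [DecidableEq I] [Zero I] [Fintype N] [DecidableEq N]
    [Zero N] (A B : Matrix ι ι ℂ) (V : ι → Matrix (I × N) (I × N) ℂ) :
    encVec (Matrix.reindex (Equiv.prodAssoc ι I N).symm (Equiv.prodAssoc ι I N).symm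
        (A ⊗ₖ 1 * (∑ k, Matrix.single k k 1 ⊗ₖ V k) * B ⊗ₖ 1)) =
      ∑ k, (A 0 k * B k 0) • encVec (V k) := by
  ext p
  simp [encVec, toEuc, Matrix.kronecker_one_mul_sum_single_kronecker_mul_kronecker_one_apply]

section BlockNorm

variable {𝕜 ι κ : Type*} [RCLike 𝕜] [Fintype ι] [Fintype κ]

theorem norm_sq_toEuc_mul_blocks (c : ι → 𝕜) (v : ι → EuclideanSpace 𝕜 κ) :
    ‖toEuc fun p : ι × κ => c p.1 * v p.1 p.2‖ ^ 2 = ∑ j, ‖c j‖ ^ 2 * ‖v j‖ ^ 2 := by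
  simp_rw [EuclideanSpace.norm_sq_eq, Fintype.sum_prod_type, Finset.mul_sum, ← mul_pow,
    ← norm_mul]
  rfl

theorem norm_toEuc_mul_blocks_le {ε : ℝ} (hε : 0 ≤ ε) (c : ι → 𝕜) {E : ι → EuclideanSpace 𝕜 κ}
    (hE : ∀ j, ‖E j‖ ≤ ε) (hc : ∑ j, ‖c j‖ ^ 2 ≤ 1) :
    ‖toEuc fun p : ι × κ => c p.1 * E p.1 p.2‖ ≤ ε := by
  refine (pow_le_pow_iff_left₀ (norm_nonneg _) hε two_ne_zero).mp ?_
  calc ‖toEuc fun p : ι × κ => c p.1 * E p.1 p.2‖ ^ 2 = ∑ j, ‖c j‖ ^ 2 * ‖E j‖ ^ 2 :=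
        norm_sq_toEuc_mul_blocks c E
    _ ≤ ∑ j, ‖c j‖ ^ 2 * ε ^ 2 := by gcongr with j; exact hE j
    _ = (∑ j, ‖c j‖ ^ 2) * ε ^ 2 := (Finset.sum_mul ..).symm
    _ ≤ ε ^ 2 := mul_le_of_le_one_left (sq_nonneg ε) hc

end BlockNorm

theorem concatenation_of_vector_encodings_general
    (d n a : ℕ) (ε : ℝ) (hε0 : 0 ≤ ε)
    (α : Fin (2^d) → ℝ)
    (ψ : Fin (2^d) → EuclideanSpace ℂ (Fin (2^n))) (hψn : ∀ j, ‖ψ j‖ = 1)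
    (V : Fin (2^d) → Matrix (Fin (2^a) × (Fin (2^d) × Fin (2^n)))
        (Fin (2^a) × (Fin (2^d) × Fin (2^n))) ℂ)
    (hVunit : ∀ j, V j ∈ Matrix.unitaryGroup (Fin (2^a) × (Fin (2^d) × Fin (2^n))) ℂ)
    (hVenc : ∀ j, ∃ E : EuclideanSpace ℂ (Fin (2^n)), ‖E‖ ≤ ε ∧
        ∀ p : Fin (2^d) × Fin (2^n),
          encVec (V j) p = (1 / (α j : ℂ)) * (if p.1 = j then ψ j p.2 - E p.2 else 0))
    (Ψ : EuclideanSpace ℂ (Fin (2^d) × Fin (2^n)))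
    (hΨ : Ψ = toEuc fun p => ψ p.1 p.2 / (α p.1 : ℂ))
    (𝒩 : ℝ) (h𝒩 : 𝒩 = ‖Ψ‖)
    (S : Matrix (Fin (2^d) × (Fin (2^a) × (Fin (2^d) × Fin (2^n))))
        (Fin (2^d) × (Fin (2^a) × (Fin (2^d) × Fin (2^n)))) ℂ)
    (hS : S = ∑ j : Fin (2^d), Matrix.single j j (1 : ℂ) ⊗ₖ V j)
    (Hh : Matrix (Fin (2^d) × (Fin (2^a) × (Fin (2^d) × Fin (2^n))))
        (Fin (2^d) × (Fin (2^a) × (Fin (2^d) × Fin (2^n)))) ℂ)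
    (hH : Hh = Hpow d ⊗ₖ (1 : Matrix (Fin (2^a) × (Fin (2^d) × Fin (2^n)))
        (Fin (2^a) × (Fin (2^d) × Fin (2^n))) ℂ)) :
    𝒩 = Real.sqrt (∑ j, 1 / (α j) ^ 2) ∧
    IsVE (Matrix.reindex
        (Equiv.prodAssoc (Fin (2^d)) (Fin (2^a)) (Fin (2^d) × Fin (2^n))).symm
        (Equiv.prodAssoc (Fin (2^d)) (Fin (2^a)) (Fin (2^d) × Fin (2^n))).symm
        (Hh * S * Hh))
      ((2^d : ℝ) / 𝒩) ε (𝒩⁻¹ • Ψ) := by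
  set U := Matrix.reindex (Equiv.prodAssoc (Fin (2^d)) (Fin (2^a)) (Fin (2^d) × Fin (2^n))).symm
    (Equiv.prodAssoc (Fin (2^d)) (Fin (2^a)) (Fin (2^d) × Fin (2^n))).symm (Hh * S * Hh) with hU
  subst hH hS
  choose E hE hVE using hVenc
  have hΨ_blocks : Ψ = toEuc fun p => (α p.1 : ℂ)⁻¹ * ψ p.1 p.2 := by
    simp_rw [hΨ, div_eq_inv_mul]
  have h𝒩_sq : 𝒩 ^ 2 = ∑ j, 1 / α j ^ 2 := by
    rw [h𝒩, hΨ_blocks, norm_sq_toEuc_mul_blocks (fun j => (α j : ℂ)⁻¹) ψ]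
    simp [hψn]
  refine ⟨by rw [← h𝒩_sq, Real.sqrt_sq (h𝒩 ▸ norm_nonneg Ψ)], Matrix.reindex_mem_unitaryGroup _
    (Matrix.kronecker_one_mul_sum_single_kronecker_mul_mem_unitaryGroup
      (Hpow_mem_unitaryGroup d) (Hpow_mem_unitaryGroup d) hVunit), ?_⟩
  have henc :
      encVec U = (2 ^ d : ℂ)⁻¹ • toEuc fun p => (α p.1 : ℂ)⁻¹ * (ψ p.1 p.2 - E p.1 p.2) := by
    rw [hU, encVec_kronecker_one_mul_sum_single_kronecker_mul]
    simp_rw [Hpow_zero_apply_mul_Hpow_apply_zero, ← Finset.smul_sum]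
    congr 1
    ext p
    simp [hVE, toEuc]
  have herr : 𝒩⁻¹ • Ψ - ((2 ^ d / 𝒩 : ℝ) : ℂ) • encVec U =
      toEuc fun p => ((𝒩 : ℂ)⁻¹ * (α p.1 : ℂ)⁻¹) * E p.1 p.2 := by
    rw [henc, hΨ_blocks]
    ext p
    simp [toEuc]
    field_simp
    ring
  have hcoeff : ∑ j, ‖(𝒩 : ℂ)⁻¹ * (α j : ℂ)⁻¹‖ ^ 2 = (𝒩 ^ 2)⁻¹ * 𝒩 ^ 2 := by
    simp [h𝒩_sq, mul_pow, Finset.mul_sum]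
  rw [herr]
  exact norm_toEuc_mul_blocks_le hε0 (fun j => (𝒩 : ℂ)⁻¹ * (α j : ℂ)⁻¹) hE
    (hcoeff.le.trans inv_mul_le_one)

/-- **Concatenation of vector-encodings** (Lemma 2.5).
Given unitaries `V j` whose encoded vector is exactly `(1/α_j)|j⟩ ⊗ (ψ_j − E_j)` with
`‖E_j‖ ≤ ε`, the circuit `Ĥ S Ĥ` with `S = Σ_j |j⟩⟨j| ⊗ V_j` and `Ĥ = H^{⊗d} ⊗ I`
(with the control and ancilla registers grouped in front, i.e. reindexed along the
product associator) is a `(2^d/𝒩, d + a, ε)`-VE for `Ψ/𝒩` where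
`Ψ = Σ_j |j⟩ ⊗ ψ_j / α_j` and `𝒩 = ‖Ψ‖₂ = √(Σ_j 1/α_j²)`. -/
theorem concatenation_of_vector_encodings
    (d n a : ℕ) (ε : ℝ) (hε0 : 0 ≤ ε) (hε1 : ε < 1)
    (α : Fin (2^d) → ℝ) (hα : ∀ j, 1 ≤ α j)
    (ψ : Fin (2^d) → EuclideanSpace ℂ (Fin (2^n))) (hψn : ∀ j, ‖ψ j‖ = 1)
    (V : Fin (2^d) → Matrix (Fin (2^a) × (Fin (2^d) × Fin (2^n)))
        (Fin (2^a) × (Fin (2^d) × Fin (2^n))) ℂ)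
    (hVunit : ∀ j, V j ∈ Matrix.unitaryGroup (Fin (2^a) × (Fin (2^d) × Fin (2^n))) ℂ)
    (hVenc : ∀ j, ∃ E : EuclideanSpace ℂ (Fin (2^n)), ‖E‖ ≤ ε ∧
        ∀ p : Fin (2^d) × Fin (2^n),
          encVec (V j) p = (1 / (α j : ℂ)) * (if p.1 = j then ψ j p.2 - E p.2 else 0))
    (Ψ : EuclideanSpace ℂ (Fin (2^d) × Fin (2^n)))
    (hΨ : Ψ = toEuc fun p => ψ p.1 p.2 / (α p.1 : ℂ))
    (𝒩 : ℝ) (h𝒩 : 𝒩 = ‖Ψ‖)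
    (S : Matrix (Fin (2^d) × (Fin (2^a) × (Fin (2^d) × Fin (2^n))))
        (Fin (2^d) × (Fin (2^a) × (Fin (2^d) × Fin (2^n)))) ℂ)
    (hS : S = ∑ j : Fin (2^d), Matrix.single j j (1 : ℂ) ⊗ₖ V j)
    (Hh : Matrix (Fin (2^d) × (Fin (2^a) × (Fin (2^d) × Fin (2^n))))
        (Fin (2^d) × (Fin (2^a) × (Fin (2^d) × Fin (2^n)))) ℂ)
    (hH : Hh = Hpow d ⊗ₖ (1 : Matrix (Fin (2^a) × (Fin (2^d) × Fin (2^n)))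
        (Fin (2^a) × (Fin (2^d) × Fin (2^n))) ℂ)) :
    𝒩 = Real.sqrt (∑ j, 1 / (α j) ^ 2) ∧
    IsVE (Matrix.reindex
        (Equiv.prodAssoc (Fin (2^d)) (Fin (2^a)) (Fin (2^d) × Fin (2^n))).symm
        (Equiv.prodAssoc (Fin (2^d)) (Fin (2^a)) (Fin (2^d) × Fin (2^n))).symm
        (Hh * S * Hh))
      ((2^d : ℝ) / 𝒩) ε (𝒩⁻¹ • Ψ) :=
  concatenation_of_vector_encodings_general d n a ε hε0 α ψ hψn V hVunit hVenc Ψ hΨ 𝒩 h𝒩 S hS Hh hH
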